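/- Let n ≥ 1, a : Fin n → ℝ and b ∈ ℝ with 0 < a i < b for all i, and let λ ∈ ℝ satisfy 0 ≤ λ < a i for all i. Let f_λ be the diagonal linear map on ℝ^{n+1} multiplying x_i by Real.sqrt ((a i - λ)/(a i)) (i ≥ 1) and x₀ by Real.sqrt ((b - λ)/b), and let g_λ = f_λ⁻¹ be its inverse. Suppose x, y ∈ ℝ^{n+1} satisfy B(x,x) = B(y,y) = -1, x 0 > 0, y 0 > 0, q(x) = ∑_{i=1}^n (x i)^2/a i - (x 0)^2/b = 0 and q_λ(y) = ∑_{i=1}^n (y i)^2/(a i - λ) - (y 0)^2/(b - λ) = 0. Then B(f_λ x, f_λ x) = -1, B(g_λ y, g_λ y) = -1, (f_λ x) 0 > 0, (g_λ y) 0 > 0, and Real.arcosh (-B(x, y)) = Real.arcosh (-B(f_λ x, g_λ y)). (Hyperbolic Ivory Lemma: the hyperbolic distance between x and y equals the hyperbolic distance between the corresponding points f_λ x and f_λ⁻¹ y on the two confocal hyperbolic ellipsoids.) -/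

import Mathlib

/-- The inverse hyperbolic cosine, `arcosh x = log (x + √(x² - 1))`. -/
noncomputable def Real.arcosh' (x : ℝ) : ℝ := Real.log (x + Real.sqrt (x ^ 2 - 1))

/-- The Minkowski bilinear form on `ℝ^{n+1}`: `B(x,y) = -x₀y₀ + ∑_{i=1}^n x_i y_i`. -/
def minkowskiForm (n : ℕ) (x y : Fin (n + 1) → ℝ) : ℝ :=
  -(x 0 * y 0) + ∑ i : Fin n, x i.succ * y i.succ

/-!
Both `f_λ` and `g_λ = f_λ⁻¹` are diagonal, so the factors cancel in `B(f_λ x, g_λ y)` and the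
distance is preserved. The squared diagonal entries of `f_λ` are `1 - λ / c` for the semi-axes
`c ∈ {a_i, b}`, hence `B(f_λ x, f_λ x) = B(x, x) - λ q(x)`; those of `g_λ` are `1 + λ / (c - λ)`,
hence `B(g_λ y, g_λ y) = B(y, y) + λ q_λ(y)`. On `E` resp. `E_λ` the correction vanishes.
-/

/-- `ellipsoidForm n a b` is `q`, and `ellipsoidForm n (a - λ) (b - λ)` is `q_λ`. -/
noncomputable def ellipsoidForm (n : ℕ) (α : Fin n → ℝ) (β : ℝ) (x : Fin (n + 1) → ℝ) : ℝ :=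
  ∑ i : Fin n, x i.succ ^ 2 / α i - x 0 ^ 2 / β

section DiagonalScaling

variable {n : ℕ} {u v x y : Fin (n + 1) → ℝ} {s₀ : ℝ} {s : Fin n → ℝ}

theorem minkowskiForm_self_of_diagonal {μ β : ℝ} {α : Fin n → ℝ}
    (hu₀ : u 0 = s₀ * x 0) (hu : ∀ i, u i.succ = s i * x i.succ)
    (hs₀ : s₀ ^ 2 = 1 - μ / β) (hs : ∀ i, s i ^ 2 = 1 - μ / α i) :
    minkowskiForm n u u = minkowskiForm n x x - μ * ellipsoidForm n α β x := by
  have hterm : ∀ i, u i.succ * u i.succ = x i.succ * x i.succ - μ * (x i.succ ^ 2 / α i) := by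
    intro i
    rw [hu]
    linear_combination x i.succ ^ 2 * hs i
  simp only [minkowskiForm, ellipsoidForm, hterm, Finset.sum_sub_distrib, ← Finset.mul_sum, hu₀]
  linear_combination -(x 0 ^ 2) * hs₀

theorem minkowskiForm_of_diagonal_inv (hs₀ : s₀ ≠ 0) (hs : ∀ i, s i ≠ 0)
    (hu₀ : u 0 = s₀ * x 0) (hu : ∀ i, u i.succ = s i * x i.succ)
    (hv₀ : v 0 = s₀⁻¹ * y 0) (hv : ∀ i, v i.succ = (s i)⁻¹ * y i.succ) :
    minkowskiForm n u v = minkowskiForm n x y := by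
  have hcancel : ∀ {c : ℝ} (t r : ℝ), c ≠ 0 → c * t * (c⁻¹ * r) = t * r := by
    intro c t r hc
    field_simp
  simp only [minkowskiForm, hu₀, hu, hv₀, hv, hcancel _ _ hs₀, hcancel _ _ (hs _)]

end DiagonalScaling

section IvoryScale

variable {c lam : ℝ}

theorem sqrt_sub_div_pos (hlc : lam < c) (hc : 0 < c) : 0 < √((c - lam) / c) :=
  Real.sqrt_pos.2 (div_pos (sub_pos.2 hlc) hc)

theorem sq_sqrt_sub_div (hlc : lam < c) (hc : 0 < c) : √((c - lam) / c) ^ 2 = 1 - lam / c := by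
  rw [Real.sq_sqrt (div_nonneg (sub_nonneg.2 hlc.le) hc.le)]
  field_simp

theorem sq_inv_sqrt_sub_div (hlc : lam < c) (hc : 0 < c) :
    (√((c - lam) / c))⁻¹ ^ 2 = 1 - -lam / (c - lam) := by
  rw [inv_pow, sq_sqrt_sub_div hlc hc]
  have : c - lam ≠ 0 := (sub_pos.2 hlc).ne'
  field_simp
  ring

end IvoryScale

/-- **Hyperbolic Ivory Lemma**: for `x` on the hyperbolic ellipsoid `E ⊂ ℍⁿ` and `y` on the
confocal hyperbolic ellipsoid `E_λ`, the hyperbolic distance `arcosh(-B(x,y))` equals the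
hyperbolic distance between the corresponding points `f_λ x ∈ E_λ` and `f_λ⁻¹ y ∈ E`. -/
theorem ivory_lemma_hyperbolic (n : ℕ) (hn : 1 ≤ n) (a : Fin n → ℝ) (b : ℝ)
    (ha : ∀ i, 0 < a i) (hab : ∀ i, a i < b)
    (lam : ℝ) (hlam : ∀ i, lam < a i)
    (f g : (Fin (n + 1) → ℝ) →ₗ[ℝ] (Fin (n + 1) → ℝ))
    (hf0 : ∀ x : Fin (n + 1) → ℝ, f x 0 = Real.sqrt ((b - lam) / b) * x 0)
    (hfi : ∀ (x : Fin (n + 1) → ℝ) (i : Fin n),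
      f x i.succ = Real.sqrt ((a i - lam) / a i) * x i.succ)
    (hg0 : ∀ y : Fin (n + 1) → ℝ, g y 0 = (Real.sqrt ((b - lam) / b))⁻¹ * y 0)
    (hgi : ∀ (y : Fin (n + 1) → ℝ) (i : Fin n),
      g y i.succ = (Real.sqrt ((a i - lam) / a i))⁻¹ * y i.succ)
    (x y : Fin (n + 1) → ℝ)
    (hBx : minkowskiForm n x x = -1) (hBy : minkowskiForm n y y = -1)
    (hx0 : 0 < x 0) (hy0 : 0 < y 0)
    (hqx : ∑ i : Fin n, (x i.succ) ^ 2 / a i - (x 0) ^ 2 / b = 0)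
    (hqy : ∑ i : Fin n, (y i.succ) ^ 2 / (a i - lam) - (y 0) ^ 2 / (b - lam) = 0) :
    minkowskiForm n (f x) (f x) = -1 ∧ minkowskiForm n (g y) (g y) = -1 ∧
      0 < f x 0 ∧ 0 < g y 0 ∧
      Real.arcosh' (-minkowskiForm n x y) = Real.arcosh' (-minkowskiForm n (f x) (g y)) := by
  have hb : 0 < b := (ha ⟨0, hn⟩).trans (hab ⟨0, hn⟩)
  have hlb : lam < b := (hlam ⟨0, hn⟩).trans (hab ⟨0, hn⟩)
  have hfx : minkowskiForm n (f x) (f x) = minkowskiForm n x x - lam * ellipsoidForm n a b x :=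
    minkowskiForm_self_of_diagonal (hf0 x) (hfi x) (sq_sqrt_sub_div hlb hb)
      fun i ↦ sq_sqrt_sub_div (hlam i) (ha i)
  have hgy : minkowskiForm n (g y) (g y) =
      minkowskiForm n y y - -lam * ellipsoidForm n (fun i ↦ a i - lam) (b - lam) y :=
    minkowskiForm_self_of_diagonal (hg0 y) (hgi y) (sq_inv_sqrt_sub_div hlb hb)
      fun i ↦ sq_inv_sqrt_sub_div (hlam i) (ha i)
  have hfg : minkowskiForm n (f x) (g y) = minkowskiForm n x y :=
    minkowskiForm_of_diagonal_inv (sqrt_sub_div_pos hlb hb).ne'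
      (fun i ↦ (sqrt_sub_div_pos (hlam i) (ha i)).ne') (hf0 x) (hfi x) (hg0 y) (hgi y)
  refine ⟨?_, ?_, ?_, ?_, by rw [hfg]⟩
  · rw [hfx, hBx, ellipsoidForm, hqx, mul_zero, sub_zero]
  · rw [hgy, hBy, ellipsoidForm, hqy, mul_zero, sub_zero]
  · exact hf0 x ▸ mul_pos (sqrt_sub_div_pos hlb hb) hx0
  · exact hg0 y ▸ mul_pos (inv_pos.2 (sqrt_sub_div_pos hlb hb)) hy0
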